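/- There is no nonzero polynomial P ∈ ℝ[X,Y] such that P(d, arccos(d) − d·√(1 − d²)) = 0 for all d ∈ (-1,1). Equivalently, the area of the circular segment cut from the unit disk by the line {x₁ = d} is not an algebraic function of d (Newton's Lemma XXVIII for the disk). -/

import Mathlib

/-!
Substituting `d = cos θ` turns the relation into `P(cos θ, θ - cos θ sin θ) = 0` for `θ ∈ (0, π)`.
The left side is real analytic in `θ`, so the relation holds for every real `θ`. Replacing `θ` by
`θ + 2πk` fixes `cos θ` and `sin θ` but shifts the second coordinate by `2πk`, so for each
`c ∈ [-1, 1]` the one-variable polynomial `P(c, ·)` has infinitely many roots. Hence `P` vanishes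
on `[-1, 1] × ℝ`, and therefore `P = 0`.
-/

open MvPolynomial Real

theorem MvPolynomial.eval_update_eq_zero_of_infinite {R σ : Type*} [CommRing R] [IsDomain R]
    [DecidableEq σ] {P : MvPolynomial σ R} {x : σ → R} {i : σ}
    (h : {t | eval (Function.update x i t) P = 0}.Infinite) (t : R) :
    eval (Function.update x i t) P = 0 := by
  set q : Polynomial R := aeval (Function.update (Polynomial.C ∘ x) i Polynomial.X) P
  have hq : ∀ t, q.eval t = eval (Function.update x i t) P := fun t => by
    rw [← Polynomial.coe_aeval_eq_eval, comp_aeval_apply, aeval_eq_eval]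
    congr 2
    funext j
    by_cases hj : j = i <;> simp [hj]
  have hq0 : q = 0 := Polynomial.eq_zero_of_infinite_isRoot q (by simpa [Polynomial.IsRoot, hq])
  rw [← hq, hq0, Polynomial.eval_zero]

theorem cos_mem_Ioo_neg_one_one {θ : ℝ} (hθ : θ ∈ Set.Ioo 0 π) : cos θ ∈ Set.Ioo (-1) 1 := by
  have := sin_pos_of_pos_of_lt_pi hθ.1 hθ.2
  have := sin_sq_add_cos_sq θ
  constructor <;> nlinarith

theorem arccos_cos_sub_mul_sqrt {θ : ℝ} (h₀ : 0 ≤ θ) (hπ : θ ≤ π) :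
    arccos (cos θ) - cos θ * √(1 - cos θ ^ 2) = θ - cos θ * sin θ := by
  rw [arccos_cos h₀ hπ, sin_eq_sqrt_one_sub_cos_sq h₀ hπ]

theorem analyticOnNhd_eval_cos_sub_cos_mul_sin (P : MvPolynomial (Fin 2) ℝ) :
    AnalyticOnNhd ℝ (fun θ => eval ![cos θ, θ - cos θ * sin θ] P) Set.univ := by
  simp_rw [← aeval_eq_eval]
  refine AnalyticOnNhd.aeval_mvPolynomial (fun i θ _ => ?_) P
  fin_cases i <;>
    simp only [Fin.zero_eta, Fin.mk_one, Matrix.cons_val_zero, Matrix.cons_val_one,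
      Matrix.cons_val_fin_one] <;> fun_prop

theorem eval_cos_sub_cos_mul_sin_eq_zero {P : MvPolynomial (Fin 2) ℝ}
    (hP : ∀ d ∈ Set.Ioo (-1 : ℝ) 1, eval ![d, arccos d - d * √(1 - d ^ 2)] P = 0) (θ : ℝ) :
    eval ![cos θ, θ - cos θ * sin θ] P = 0 := by
  have hIoo : ∀ θ ∈ Set.Ioo 0 π, eval ![cos θ, θ - cos θ * sin θ] P = 0 := fun θ hθ => by
    simpa [arccos_cos_sub_mul_sqrt hθ.1.le hθ.2.le] using hP _ (cos_mem_Ioo_neg_one_one hθ)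
  have hnhds : Set.Ioo 0 π ∈ nhds (π / 2) :=
    isOpen_Ioo.mem_nhds ⟨by positivity, by linarith [pi_pos]⟩
  exact (analyticOnNhd_eval_cos_sub_cos_mul_sin P).eqOn_zero_of_preconnected_of_eventuallyEq_zero
    isPreconnected_univ (Set.mem_univ _) (Filter.eventually_of_mem hnhds hIoo) (Set.mem_univ θ)

theorem eval_eq_zero_of_eval_cos_sub_cos_mul_sin_eq_zero {P : MvPolynomial (Fin 2) ℝ}
    (hP : ∀ θ, eval ![cos θ, θ - cos θ * sin θ] P = 0) (v : Fin 2 → ℝ)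
    (hv : v 0 ∈ Set.Icc (-1) 1) : eval v P = 0 := by
  set θ := arccos (v 0)
  have hcos : cos θ = v 0 := cos_arccos hv.1 hv.2
  have hroots : ∀ k : ℤ, eval (Function.update v 1 (θ - v 0 * sin θ + k * (2 * π))) P = 0 := by
    intro k
    have hshift := hP (θ + k * (2 * π))
    simp only [cos_add_int_mul_two_pi, sin_add_int_mul_two_pi, hcos] at hshift
    convert hshift using 3
    funext i
    fin_cases i
    · simp
    · simp only [Fin.mk_one, Function.update_self, Matrix.cons_val_one, Matrix.cons_val_fin_one]
      ring
  have hinf : (Set.range fun k : ℤ => θ - v 0 * sin θ + k * (2 * π)).Infinite :=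
    Set.infinite_range_of_injective fun a b h => by simpa [pi_ne_zero] using h
  have hline := eval_update_eq_zero_of_infinite (hinf.mono (by rintro _ ⟨k, rfl⟩; exact hroots k))
  simpa only [Function.update_eq_self] using hline (v 1)

/-- Newton's Lemma XXVIII for the disk: the circular-segment area function
`A(d) = arccos d − d √(1 − d²)` is not algebraic on `(-1, 1)`. -/
theorem stmt_5 :
    ¬ ∃ P : MvPolynomial (Fin 2) ℝ, P ≠ 0 ∧
      ∀ d ∈ Set.Ioo (-1 : ℝ) 1,
        MvPolynomial.eval ![d, Real.arccos d - d * Real.sqrt (1 - d ^ 2)] P = 0 := by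
  rintro ⟨P, hP, hroot⟩
  have hstrip := eval_eq_zero_of_eval_cos_sub_cos_mul_sin_eq_zero
    (eval_cos_sub_cos_mul_sin_eq_zero hroot)
  refine hP (funext_set ![Set.Icc (-1) 1, Set.univ] (fun i => ?_) fun v hv => ?_)
  · fin_cases i
    · exact Set.Icc_infinite (by norm_num)
    · exact Set.infinite_univ
  · rw [map_zero]
    exact hstrip v (hv 0 trivial)
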